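/- arXiv:1710.00445 — 2 statements merged into one kernel-verified Lean document; each statement's English description precedes it below -/
import Mathlib

section
/- Let G be a group acting on P^{n-1}(F) as PGL_n(F) (n ≥ 3), and let ℓ₁ ≠ ℓ₂ be two distinct points. Then the stabilizer of the pair (ℓ₁, ℓ₂) has exactly 4 orbits on P^{n-1}(F): {ℓ₁}, {ℓ₂}, the set of points on the line through ℓ₁ and ℓ₂ other than ℓ₁, ℓ₂, and the complement of that line. -/
open scoped LinearAlgebra.Projectivization

open Projectivization

/-!
The stabilizer of `ℓ₁ = [v₁]` and `ℓ₂ = [v₂]` fixes both points and maps the line `ℓ₁ℓ₂` to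
itself, so each of the four sets is invariant under it. It is transitive on each of them because
a linear map prescribed on an independent family extends to an automorphism: `[c₁v₁ + c₂v₂]` with
`c₁c₂ ≠ 0` is sent to `[d₁v₁ + d₂v₂]` by any `g` with `g vᵢ = (cᵢ⁻¹dᵢ) vᵢ`, and a point `[u]` off
the line is sent to `[t]` by any `g` fixing `v₁, v₂` with `g u = t`, as `v₁, v₂, u` and
`v₁, v₂, t` are both independent.
-/

theorem MulAction.orbit_eq_of_forall_smul_mem {G α : Type*} [Group G] [MulAction G α]
    {s : Set α} {x : α} (hx : x ∈ s) (hs : ∀ g : G, ∀ y ∈ s, g • y ∈ s)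
    (htrans : ∀ y ∈ s, ∃ g : G, g • x = y) : orbit G x = s :=
  Set.Subset.antisymm (by rintro _ ⟨g, rfl⟩; exact hs g x hx) htrans

theorem LinearIndependent.exists_linearEquiv_apply_eq {K V ι : Type*} [DivisionRing K]
    [AddCommGroup V] [Module K V] [Finite ι] {v w : ι → V}
    (hv : LinearIndependent K v) (hw : LinearIndependent K w) :
    ∃ g : V ≃ₗ[K] V, ∀ i, g (v i) = w i := by
  have : FiniteDimensional K (Submodule.span K (Set.range v)) :=
    FiniteDimensional.span_of_finite K (Set.finite_range v)
  obtain ⟨g, hg⟩ := Submodule.exists_linearEquiv_restrict_eq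
    (hv.linearCombinationEquiv.symm ≪≫ₗ hw.linearCombinationEquiv)
  refine ⟨g, fun i => ?_⟩
  rw [← hg ⟨v i, Submodule.subset_span (Set.mem_range_self i)⟩]
  change (hw.linearCombinationEquiv (hv.repr _) : V) = _
  rw [hv.repr_eq_single i _ rfl]
  simp

namespace Projectivization

open MulAction

variable {K V : Type*} [DivisionRing K] [AddCommGroup V] [Module K V]

def line (a b : ℙ K V) : Set (ℙ K V) := {w | w.submodule ≤ a.submodule ⊔ b.submodule}

theorem mem_line_iff {a b w : ℙ K V} :
    w ∈ line a b ↔ w.rep ∈ Submodule.span K {a.rep, b.rep} := by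
  rw [line, Set.mem_ofPred_eq, submodule_eq w, submodule_eq a, submodule_eq b,
    Submodule.span_singleton_le_iff_mem, Submodule.span_insert]

theorem submodule_smul (g : V ≃ₗ[K] V) (w : ℙ K V) :
    (g • w).submodule = w.submodule.map (g : V →ₗ[K] V) := by
  induction w using ind with
  | h v hv =>
    rw [smul_mk, submodule_mk, submodule_mk, Submodule.map_span, Set.image_singleton]
    rfl

theorem smul_mem_line_smul_iff (g : V ≃ₗ[K] V) {a b w : ℙ K V} :
    g • w ∈ line (g • a) (g • b) ↔ w ∈ line a b := by
  simp only [line, Set.mem_ofPred_eq, submodule_smul, ← Submodule.map_sup]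
  exact Submodule.map_le_map_iff_of_injective g.injective _ _

theorem eq_of_rep_eq_smul {x y : ℙ K V} {c : K} (h : x.rep = c • y.rep) : x = y := by
  rw [← mk_rep x, ← mk_rep y]
  exact (mk_eq_mk_iff' K _ _ _ _).2 ⟨c, h.symm⟩

theorem smul_eq_of_apply_rep_eq_smul {g : V ≃ₗ[K] V} {x y : ℙ K V} {c : K}
    (h : g x.rep = c • y.rep) : g • x = y := by
  rw [← mk_rep x, smul_mk]
  conv_rhs => rw [← mk_rep y]
  exact (mk_eq_mk_iff' K _ _ _ _).2 ⟨c, h.symm⟩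

theorem exists_rep_eq_add_of_mem_line {a b w : ℙ K V} (hw : w ∈ line a b \ {a, b}) :
    ∃ c₁ c₂ : K, c₁ ≠ 0 ∧ c₂ ≠ 0 ∧ c₁ • a.rep + c₂ • b.rep = w.rep := by
  obtain ⟨hwl, hwab⟩ := hw
  simp only [Set.mem_insert_iff, Set.mem_singleton_iff, not_or] at hwab
  obtain ⟨c₁, c₂, hc⟩ := Submodule.mem_span_pair.1 (mem_line_iff.1 hwl)
  refine ⟨c₁, c₂, fun h0 => hwab.2 ?_, fun h0 => hwab.1 ?_, hc⟩
  · exact eq_of_rep_eq_smul (c := c₂) (by rw [← hc, h0, zero_smul, zero_add])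
  · exact eq_of_rep_eq_smul (c := c₁) (by rw [← hc, h0, zero_smul, add_zero])

theorem exists_smul_eq_of_mem_line {a b w z : ℙ K V} (hab : a ≠ b)
    (hw : w ∈ line a b \ {a, b}) (hz : z ∈ line a b \ {a, b}) :
    ∃ g : V ≃ₗ[K] V, g • a = a ∧ g • b = b ∧ g • w = z := by
  obtain ⟨c₁, c₂, hc₁, hc₂, hc⟩ := exists_rep_eq_add_of_mem_line hw
  obtain ⟨d₁, d₂, hd₁, hd₂, hd⟩ := exists_rep_eq_add_of_mem_line hz
  have hli := linearIndependent_pair_iff_ne.2 hab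
  obtain ⟨g, hg⟩ := hli.exists_linearEquiv_apply_eq (hli.units_smul
    ![Units.mk0 (c₁⁻¹ * d₁) (by simp [hc₁, hd₁]), Units.mk0 (c₂⁻¹ * d₂) (by simp [hc₂, hd₂])])
  have ha : g a.rep = (c₁⁻¹ * d₁) • a.rep := by simpa [Units.smul_def] using hg 0
  have hb : g b.rep = (c₂⁻¹ * d₂) • b.rep := by simpa [Units.smul_def] using hg 1
  refine ⟨g, smul_eq_of_apply_rep_eq_smul ha, smul_eq_of_apply_rep_eq_smul hb,
    smul_eq_of_apply_rep_eq_smul (c := 1) ?_⟩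
  rw [one_smul, ← hc, ← hd, map_add, map_smul, map_smul, ha, hb, smul_smul, smul_smul,
    mul_inv_cancel_left₀ hc₁, mul_inv_cancel_left₀ hc₂]

theorem exists_smul_eq_of_notMem_line {a b w z : ℙ K V} (hab : a ≠ b)
    (hw : w ∉ line a b) (hz : z ∉ line a b) :
    ∃ g : V ≃ₗ[K] V, g • a = a ∧ g • b = b ∧ g • w = z := by
  have hli : ∀ x ∉ line a b, LinearIndependent K ![x.rep, a.rep, b.rep] := fun x hx =>
    linearIndependent_finCons.2 ⟨linearIndependent_pair_iff_ne.2 hab, by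
      rwa [Matrix.range_cons_cons_empty, ← mem_line_iff]⟩
  obtain ⟨g, hg⟩ := (hli w hw).exists_linearEquiv_apply_eq (hli z hz)
  exact ⟨g, smul_eq_of_apply_rep_eq_smul (c := 1) (by simpa using hg 1),
    smul_eq_of_apply_rep_eq_smul (c := 1) (by simpa using hg 2),
    smul_eq_of_apply_rep_eq_smul (c := 1) (by simpa using hg 0)⟩

variable (K V) in
def pairStabilizer (a b : ℙ K V) : Subgroup (V ≃ₗ[K] V) :=
  stabilizer (V ≃ₗ[K] V) a ⊓ stabilizer (V ≃ₗ[K] V) b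

theorem mem_pairStabilizer {a b : ℙ K V} {g : V ≃ₗ[K] V} :
    g ∈ pairStabilizer K V a b ↔ g • a = a ∧ g • b = b :=
  Iff.rfl

theorem smul_mem_line_iff_of_mem_pairStabilizer {a b w : ℙ K V} {g : V ≃ₗ[K] V}
    (hg : g ∈ pairStabilizer K V a b) : g • w ∈ line a b ↔ w ∈ line a b := by
  obtain ⟨ha, hb⟩ := mem_pairStabilizer.1 hg
  conv_lhs => rw [← ha, ← hb]
  exact smul_mem_line_smul_iff g

theorem orbit_pairStabilizer_left (a b : ℙ K V) : orbit (pairStabilizer K V a b) a = {a} :=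
  orbit_eq_of_forall_smul_mem rfl (fun g _ hy => hy ▸ g.2.1) fun _ hy => ⟨1, by rw [one_smul, hy]⟩

theorem orbit_pairStabilizer_right (a b : ℙ K V) : orbit (pairStabilizer K V a b) b = {b} :=
  orbit_eq_of_forall_smul_mem rfl (fun g _ hy => hy ▸ g.2.2) fun _ hy => ⟨1, by rw [one_smul, hy]⟩

theorem orbit_pairStabilizer_of_mem_line {a b w : ℙ K V} (hab : a ≠ b)
    (hw : w ∈ line a b \ {a, b}) : orbit (pairStabilizer K V a b) w = line a b \ {a, b} := by
  refine orbit_eq_of_forall_smul_mem hw (fun g y hy => ?_) fun z hz => ?_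
  · obtain ⟨ha, hb⟩ := mem_pairStabilizer.1 g.2
    have hinj : Function.Injective ((g : V ≃ₗ[K] V) • · : ℙ K V → ℙ K V) :=
      MulAction.injective _
    simpa only [Set.mem_sdiff, Set.mem_insert_iff, Set.mem_singleton_iff, Subgroup.smul_def,
      smul_mem_line_iff_of_mem_pairStabilizer g.2, hinj.eq_iff' ha, hinj.eq_iff' hb] using hy
  · obtain ⟨g, ha, hb, hwz⟩ := exists_smul_eq_of_mem_line hab hw hz
    exact ⟨⟨g, ha, hb⟩, hwz⟩

theorem orbit_pairStabilizer_of_notMem_line {a b w : ℙ K V} (hab : a ≠ b)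
    (hw : w ∉ line a b) : orbit (pairStabilizer K V a b) w = (line a b)ᶜ := by
  refine orbit_eq_of_forall_smul_mem hw (fun g y hy => ?_) fun z hz => ?_
  · exact (smul_mem_line_iff_of_mem_pairStabilizer g.2).not.2 hy
  · obtain ⟨g, ha, hb, hwz⟩ := exists_smul_eq_of_notMem_line hab hw hz
    exact ⟨⟨g, ha, hb⟩, hwz⟩

end Projectivization

theorem stmt_14_general {F : Type*} [Field F] (n : ℕ)
    (ℓ₁ ℓ₂ : ℙ F (Fin n → F)) (h12 : ℓ₁ ≠ ℓ₂)
    (pmap : ((Fin n → F) ≃ₗ[F] (Fin n → F)) → ℙ F (Fin n → F) → ℙ F (Fin n → F))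
    (hpmap : ∀ g, pmap g =
      Projectivization.map (g : (Fin n → F) →ₗ[F] (Fin n → F)) g.injective)
    (S : ((Fin n → F) ≃ₗ[F] (Fin n → F)) → Prop)
    (hS : ∀ g, S g ↔ pmap g ℓ₁ = ℓ₁ ∧ pmap g ℓ₂ = ℓ₂)
    (L : Set (ℙ F (Fin n → F)))
    (hL : L = {w | w.submodule ≤ ℓ₁.submodule ⊔ ℓ₂.submodule})
    (orbit : ℙ F (Fin n → F) → Set (ℙ F (Fin n → F)))
    (horbit : ∀ w, orbit w = {z | ∃ g, S g ∧ pmap g w = z}) :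
    orbit ℓ₁ = {ℓ₁} ∧ orbit ℓ₂ = {ℓ₂} ∧
    (∀ w ∈ L \ {ℓ₁, ℓ₂}, orbit w = L \ {ℓ₁, ℓ₂}) ∧
    (∀ w ∉ L, orbit w = Lᶜ) := by
  have hpmap_smul : ∀ g w, pmap g w = g • w := fun g w => by
    induction w using ind with
    | h v hv => rw [hpmap, map_mk, smul_mk]; rfl
  have horbit_eq : ∀ w, orbit w = MulAction.orbit (pairStabilizer F (Fin n → F) ℓ₁ ℓ₂) w :=
    fun w => by
      ext z
      simp [horbit, hS, hpmap_smul, MulAction.mem_orbit_iff, mem_pairStabilizer]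
  obtain rfl : L = line ℓ₁ ℓ₂ := hL
  simp only [horbit_eq]
  exact ⟨orbit_pairStabilizer_left ℓ₁ ℓ₂, orbit_pairStabilizer_right ℓ₁ ℓ₂,
    fun w hw => orbit_pairStabilizer_of_mem_line h12 hw,
    fun w hw => orbit_pairStabilizer_of_notMem_line h12 hw⟩

/-- For `n ≥ 3`, the stabilizer in `PGL_n(F)` of two distinct points
`ℓ₁ ≠ ℓ₂` of `P^{n-1}(F)` has exactly 4 orbits: `{ℓ₁}`, `{ℓ₂}`, the remaining
points of the line through `ℓ₁` and `ℓ₂`, and the complement of that line. -/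
theorem stmt_14 {F : Type*} [Field F] [Infinite F] (n : ℕ) (hn : 3 ≤ n)
    (ℓ₁ ℓ₂ : ℙ F (Fin n → F)) (h12 : ℓ₁ ≠ ℓ₂)
    (pmap : ((Fin n → F) ≃ₗ[F] (Fin n → F)) → ℙ F (Fin n → F) → ℙ F (Fin n → F))
    (hpmap : ∀ g, pmap g =
      Projectivization.map (g : (Fin n → F) →ₗ[F] (Fin n → F)) g.injective)
    (S : ((Fin n → F) ≃ₗ[F] (Fin n → F)) → Prop)
    (hS : ∀ g, S g ↔ pmap g ℓ₁ = ℓ₁ ∧ pmap g ℓ₂ = ℓ₂)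
    (L : Set (ℙ F (Fin n → F)))
    (hL : L = {w | w.submodule ≤ ℓ₁.submodule ⊔ ℓ₂.submodule})
    (orbit : ℙ F (Fin n → F) → Set (ℙ F (Fin n → F)))
    (horbit : ∀ w, orbit w = {z | ∃ g, S g ∧ pmap g w = z}) :
    orbit ℓ₁ = {ℓ₁} ∧ orbit ℓ₂ = {ℓ₂} ∧
    (∀ w ∈ L \ {ℓ₁, ℓ₂}, orbit w = L \ {ℓ₁, ℓ₂}) ∧
    (∀ w ∉ L, orbit w = Lᶜ) :=
  stmt_14_general n ℓ₁ ℓ₂ h12 pmap hpmap S hS L hL orbit horbit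
end

section
/- Every field automorphism of an algebraically closed field F of characteristic 0 whose graph is a constructible subset of F × F is the identity. -/
open MvPolynomial

-- bridging lemma
theorem my_eval_eval₂ {F : Type*} [CommSemiring F] (φ : Fin 2 → Polynomial F)
    (f : MvPolynomial (Fin 2) F) (s : F) :
    Polynomial.eval s (eval₂ Polynomial.C φ f) =
      eval (fun i => Polynomial.eval s (φ i)) f := by
  rw [polynomial_eval_eval₂]
  have : (Polynomial.evalRingHom s).comp Polynomial.C = RingHom.id F := by
    ext r; simp
  rw [this, eval₂_id]

theorem vanish_nat {F : Type*} [Field F] [CharZero F] (g : Polynomial F)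
    (h : ∀ n : ℕ, g.eval (n : F) = 0) : g = 0 := by
  apply Polynomial.eq_zero_of_infinite_isRoot
  apply Set.infinite_of_injective_forall_mem (f := fun n : ℕ => (n : F))
  · exact Nat.cast_injective
  · exact fun n => h n

theorem vanish_ne {F : Type*} [Field F] [Infinite F] (g : Polynomial F) (b : F)
    (h : ∀ y : F, y ≠ b → g.eval y = 0) : g = 0 := by
  apply Polynomial.eq_zero_of_infinite_isRoot
  have : ({b}ᶜ : Set F).Infinite := (Set.finite_singleton b).infinite_compl
  exact this.mono (fun y hy => h y hy)

theorem graph_poly {F : Type*} [Field F] [IsAlgClosed F] [CharZero F]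
    (σ : F ≃+* F)
    (hconstr : ∃ (k : ℕ) (C D : Fin k → Set (Fin 2 → F)),
      (∀ i, (∃ T : Set (MvPolynomial (Fin 2) F),
        C i = {v | ∀ p ∈ T, MvPolynomial.eval v p = 0}) ∧
        (∃ T : Set (MvPolynomial (Fin 2) F),
        D i = {v | ∀ p ∈ T, MvPolynomial.eval v p = 0})) ∧
      {v : Fin 2 → F | σ (v 0) = v 1} = ⋃ i, C i \ D i) :
    ∃ f : MvPolynomial (Fin 2) F, f ≠ 0 ∧ ∀ x : F, eval ![x, σ x] f = 0 := by
  obtain ⟨k, C, D, hCD, hG⟩ := hconstr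
  have key : ∀ i, ∃ p : MvPolynomial (Fin 2) F, p ≠ 0 ∧
      ∀ v ∈ C i \ D i, eval v p = 0 := by
    intro i
    obtain ⟨⟨T, hT⟩, ⟨T', hT'⟩⟩ := hCD i
    by_cases hTz : ∃ p ∈ T, p ≠ 0
    · obtain ⟨p, hpT, hp0⟩ := hTz
      exact ⟨p, hp0, fun v hv => by rw [hT] at hv; exact hv.1 p hpT⟩
    · push_neg at hTz
      have hCuniv : C i = Set.univ := by
        rw [hT]; ext v; simp only [Set.mem_setOf_eq, Set.mem_univ, iff_true]
        intro p hp; rw [hTz p hp]; simp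
      by_cases hT'z : ∃ q ∈ T', q ≠ 0
      · -- D i ⊆ zeros q, and complement of graph ⊆ D i, contradiction
        obtain ⟨q, hqT, hq0⟩ := hT'z
        exfalso
        apply hq0
        have hcompl : ∀ v : Fin 2 → F, σ (v 0) ≠ v 1 → eval v q = 0 := by
          intro v hv
          have hvD : v ∈ D i := by
            by_contra hvd
            have : v ∈ C i \ D i := ⟨hCuniv ▸ Set.mem_univ v, hvd⟩
            have : v ∈ {v : Fin 2 → F | σ (v 0) = v 1} := by
              rw [hG]; exact Set.mem_iUnion.mpr ⟨i, this⟩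
            exact hv this
          rw [hT'] at hvD
          exact hvD q hqT
        -- now show q = 0
        apply MvPolynomial.funext
        intro v
        have hev : ![v 0, v 1] = v := by
          funext j; fin_cases j <;> simp
        rw [map_zero]
        rw [← hev]
        -- one-variable polynomial in y
        set g : Polynomial F := eval₂ Polynomial.C ![Polynomial.C (v 0), Polynomial.X] q with hg
        have hgy : ∀ y : F, Polynomial.eval y g = eval ![v 0, y] q := by
          intro y
          rw [hg, my_eval_eval₂]
          have harg : (fun i => Polynomial.eval y (![Polynomial.C (v 0), Polynomial.X] i))
              = ![v 0, y] := by funext j; fin_cases j <;> simp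
          rw [harg]
        have hgz : g = 0 := by
          apply vanish_ne g (σ (v 0))
          intro y hy
          rw [hgy]
          apply hcompl
          simp [hy.symm]
        rw [← hgy (v 1), hgz, Polynomial.eval_zero]
      · push_neg at hT'z
        have hDuniv : D i = Set.univ := by
          rw [hT']; ext v; simp only [Set.mem_setOf_eq, Set.mem_univ, iff_true]
          intro p hp; rw [hT'z p hp]; simp
        exact ⟨1, one_ne_zero, fun v hv => absurd (hDuniv ▸ Set.mem_univ v) hv.2⟩
  choose p hp0 hpv using key
  refine ⟨∏ i, p i, ?_, ?_⟩
  · rw [Finset.prod_ne_zero_iff]; exact fun i _ => hp0 i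
  · intro x
    have hx : (![x, σ x] : Fin 2 → F) ∈ {v : Fin 2 → F | σ (v 0) = v 1} := by simp
    rw [hG] at hx
    obtain ⟨i, hi⟩ := Set.mem_iUnion.mp hx
    rw [map_prod]
    exact Finset.prod_eq_zero (Finset.mem_univ i) (hpv i _ hi)

theorem poly_forces_id {F : Type*} [Field F] [IsAlgClosed F] [CharZero F]
    (σ : F ≃+* F) (f : MvPolynomial (Fin 2) F) (hf0 : f ≠ 0)
    (hf : ∀ x : F, eval ![x, σ x] f = 0) : ∀ a : F, σ a = a := by
  intro a
  by_contra ha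
  set c : F := σ a - a with hc
  have hc0 : c ≠ 0 := sub_ne_zero.mpr ha
  -- Stage A: vanishing along integer translates spreads to all translates
  have stageA : ∀ x t : F, eval ![x + t, σ x + t] f = 0 := by
    intro x t
    set g : Polynomial F :=
      eval₂ Polynomial.C ![Polynomial.C x + Polynomial.X,
        Polynomial.C (σ x) + Polynomial.X] f with hg
    have hgy : ∀ s : F, Polynomial.eval s g = eval ![x + s, σ x + s] f := by
      intro s
      rw [hg, my_eval_eval₂]
      have harg : (fun i => Polynomial.eval s
          ((![Polynomial.C x + Polynomial.X, Polynomial.C (σ x) + Polynomial.X]) i))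
          = ![x + s, σ x + s] := by funext j; fin_cases j <;> simp
      rw [harg]
    have hgz : g = 0 := by
      apply vanish_nat
      intro n
      rw [hgy]
      have : σ x + (n : F) = σ (x + n) := by
        rw [map_add, map_natCast]
      rw [this]
      exact hf (x + n)
    rw [← hgy t, hgz, Polynomial.eval_zero]
  -- Stage B: f vanishes on all lines y = u + s * c
  have stageB : ∀ u s : F, eval ![u, u + s * c] f = 0 := by
    intro u s
    set g : Polynomial F :=
      eval₂ Polynomial.C ![Polynomial.C u,
        Polynomial.C u + Polynomial.X * Polynomial.C c] f with hg
    have hgy : ∀ s : F, Polynomial.eval s g = eval ![u, u + s * c] f := by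
      intro s
      rw [hg, my_eval_eval₂]
      have harg : (fun i => Polynomial.eval s
          ((![Polynomial.C u, Polynomial.C u + Polynomial.X * Polynomial.C c]) i))
          = ![u, u + s * c] := by
        funext j; fin_cases j <;> simp <;> ring
      rw [harg]
    have hgz : g = 0 := by
      apply vanish_nat
      intro n
      rw [hgy]
      -- use x = n * a, t = u - n * a in stageA
      have h1 := stageA ((n : F) * a) (u - (n : F) * a)
      have h2 : σ ((n : F) * a) = (n : F) * σ a := by
        rw [map_mul, map_natCast]
      rw [h2] at h1
      have e1 : (n : F) * a + (u - (n : F) * a) = u := by ring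
      have e2 : (n : F) * σ a + (u - (n : F) * a) = u + (n : F) * c := by
        rw [hc]; ring
      rw [e1, e2] at h1
      exact h1
    rw [← hgy s, hgz, Polynomial.eval_zero]
  -- Stage C: f vanishes everywhere, contradiction
  apply hf0
  apply MvPolynomial.funext
  intro v
  have hev : ![v 0, v 1] = v := by funext j; fin_cases j <;> simp
  rw [map_zero, ← hev]
  have := stageB (v 0) ((v 1 - v 0) / c)
  have e : v 0 + (v 1 - v 0) / c * c = v 1 := by field_simp; ring
  rwa [e] at this

/-- Every field automorphism of an algebraically closed field of characteristic 0
whose graph is a Zariski-constructible subset of the affine plane is the identity.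
Here a set is Zariski-closed if it is the common zero locus of a set of polynomials,
and constructible means a finite union of differences of Zariski-closed sets. -/
theorem stmt_18 {F : Type*} [Field F] [IsAlgClosed F] [CharZero F]
    (ZariskiClosed : Set (Fin 2 → F) → Prop)
    (hZC : ∀ S, ZariskiClosed S ↔ ∃ T : Set (MvPolynomial (Fin 2) F),
      S = {v | ∀ p ∈ T, MvPolynomial.eval v p = 0})
    (σ : F ≃+* F)
    (hconstr : ∃ (k : ℕ) (C D : Fin k → Set (Fin 2 → F)),
      (∀ i, ZariskiClosed (C i) ∧ ZariskiClosed (D i)) ∧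
      {v : Fin 2 → F | σ (v 0) = v 1} = ⋃ i, C i \ D i) :
    ∀ a : F, σ a = a := by
  obtain ⟨k, C, D, hCD, hG⟩ := hconstr
  obtain ⟨f, hf0, hf⟩ := graph_poly σ
    ⟨k, C, D, fun i => ⟨(hZC _).mp (hCD i).1, (hZC _).mp (hCD i).2⟩, hG⟩
  exact poly_forces_id σ f hf0 hf
end
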